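/- If a finite (c₀,C)-colourful Rabin graph G admits a (c₀,C)-colourful decomposition D = ⟨A, (c₁,V₁,D₁,A₁), …, (c_j,V_j,D_j,A_j)⟩, then every infinite path in G satisfies the Rabin condition. -/
import Mathlib


universe u v

/-- Reachability within a set `W` of vertices: a path all of whose vertices
lie in `W`. -/
def ReachIn {V : Type u} (E : V → V → Prop) (W : Set V) (u w : V) : Prop :=
  Relation.ReflTransGen (fun a b => a ∈ W ∧ b ∈ W ∧ E a b) u w

mutual
  /-- `Decomp E Gd Bd c₀ C S`: the subgraph induced by `S` has a
  `(c₀,C)`-colourful decomposition. For `C = ∅` this means every infinite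
  path within `S` visits a vertex with good colour `c₀`; for `C ≠ ∅` it is
  `⟨A, (c₁,V₁,D₁,A₁), …, (c_j,V_j,D_j,A_j)⟩` where `A` is the set of vertices
  of `S` from which all infinite paths within `S` visit a vertex with good
  colour `c₀`, and the rest is a sequence of tuples exhausting `S ∖ A`. -/
  inductive Decomp {V : Type u} {γ : Type v} [DecidableEq γ]
      (E : V → V → Prop) (Gd Bd : V → Set γ) : γ → Finset γ → Set V → Prop
    | empty (c₀ : γ) (S : Set V) :
        (∀ π : ℕ → V, (∀ i, π i ∈ S) → (∀ i, E (π i) (π (i + 1))) →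
          ∃ i, c₀ ∈ Gd (π i)) →
        Decomp E Gd Bd c₀ ∅ S
    | attr (c₀ : γ) (C : Finset γ) (S A : Set V) :
        C ≠ ∅ →
        A = {v ∈ S | ∀ π : ℕ → V, (∀ i, π i ∈ S) → (∀ i, E (π i) (π (i + 1))) →
          π 0 = v → ∃ i, c₀ ∈ Gd (π i)} →
        DecompRest E Gd Bd c₀ C (S \ A) →
        Decomp E Gd Bd c₀ C S

  /-- `DecompRest E Gd Bd c₀ C W`: the sequence
  `(c₁,V₁,D₁,A₁), …, (c_j,V_j,D_j,A_j)` of the decomposition, exhausting the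
  remaining vertex set `W` (`W_{j+1} = ∅`). Each `V_i ⊆ W_i` has no path
  within `W_i` to `W_i ∖ V_i`, `c_i` is bad for no vertex of `V_i`, `D_i` is
  a `(c_i, C∖{c_i})`-colourful decomposition of `V_i`, and `A_i` is the set
  of vertices of `W_i` from which every infinite path within `W_i` visits
  `V_i`; then `W_{i+1} = W_i ∖ A_i`. -/
  inductive DecompRest {V : Type u} {γ : Type v} [DecidableEq γ]
      (E : V → V → Prop) (Gd Bd : V → Set γ) : γ → Finset γ → Set V → Prop
    | nil (c₀ : γ) (C : Finset γ) : DecompRest E Gd Bd c₀ C ∅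
    | cons (c₀ : γ) (C : Finset γ) (W : Set V) (c : γ) (Vi Ai : Set V) :
        c ∈ C →
        Vi ⊆ W →
        (∀ u ∈ Vi, ∀ w ∈ W \ Vi, ¬ ReachIn E W u w) →
        (∀ v ∈ Vi, c ∉ Bd v) →
        Decomp E Gd Bd c (C.erase c) Vi →
        Ai = {v ∈ W | ∀ π : ℕ → V, (∀ i, π i ∈ W) → (∀ i, E (π i) (π (i + 1))) →
          π 0 = v → ∃ i, π i ∈ Vi} →
        DecompRest E Gd Bd c₀ C (W \ Ai) →
        DecompRest E Gd Bd c₀ C W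
end

section Aux

variable {V : Type u} {γ : Type v}

/-- A vertex occurring infinitely often in a path. -/
def InfOcc (π : ℕ → V) (v : V) : Prop := ∀ N, ∃ i ≥ N, π i = v

lemma infOcc_shift (π : ℕ → V) (N : ℕ) (v : V) :
    InfOcc (fun k => π (k + N)) v ↔ InfOcc π v := by
  constructor
  · intro h M
    obtain ⟨k, hk, hkv⟩ := h M
    exact ⟨k + N, le_trans hk (Nat.le_add_right _ _), hkv⟩
  · intro h M
    obtain ⟨i, hi, hiv⟩ := h (M + N)
    refine ⟨i - N, ?_, ?_⟩
    · omega
    · show π (i - N + N) = v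
      have : i - N + N = i := by omega
      rw [this]; exact hiv

lemma pigeon [Fintype V] (π : ℕ → V) (P : ℕ → Prop)
    (h : ∀ N, ∃ i ≥ N, P i) :
    ∃ v, ∀ N, ∃ i ≥ N, π i = v ∧ P i := by
  by_contra hcon
  push_neg at hcon
  -- each fiber set is bounded, hence finite; union over V covers {i | P i}
  have hfin : ∀ v : V, {i | π i = v ∧ P i}.Finite := by
    intro v
    by_contra hinf
    have hinf' : {i | π i = v ∧ P i}.Infinite := hinf
    obtain ⟨N, hN⟩ := hcon v
    obtain ⟨i, hiS, hiN⟩ := hinf'.exists_gt N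
    exact hN i (le_of_lt hiN) hiS.1 hiS.2
  have hcov : {i | P i} ⊆ ⋃ v : V, {i | π i = v ∧ P i} := by
    intro i hi
    exact Set.mem_iUnion.mpr ⟨π i, rfl, hi⟩
  have hPfin : {i | P i}.Finite :=
    Set.Finite.subset (Set.finite_iUnion hfin) hcov
  obtain ⟨b, hb⟩ := hPfin.bddAbove
  obtain ⟨i, hi, hPi⟩ := h (b + 1)
  have := hb hPi
  omega

end Aux

theorem key {V : Type u} {γ : Type v} [Fintype V] [DecidableEq γ]
    {E : V → V → Prop} {Gd Bd : V → Set γ} {c₀ : γ} {C : Finset γ} {S : Set V}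
    (h : Decomp E Gd Bd c₀ C S) :
    (∀ v ∈ S, c₀ ∉ Bd v) → ∀ π : ℕ → V, (∀ i, π i ∈ S) →
      (∀ i, E (π i) (π (i + 1))) →
      ∃ c : γ, (∃ v, InfOcc π v ∧ c ∈ Gd v) ∧ ∀ v, InfOcc π v → c ∉ Bd v := by
  refine Decomp.rec (E := E) (Gd := Gd) (Bd := Bd)
    (motive_1 := fun c₀ _ S _ => (∀ v ∈ S, c₀ ∉ Bd v) → ∀ π : ℕ → V,
      (∀ i, π i ∈ S) → (∀ i, E (π i) (π (i + 1))) →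
      ∃ c : γ, (∃ v, InfOcc π v ∧ c ∈ Gd v) ∧ ∀ v, InfOcc π v → c ∉ Bd v)
    (motive_2 := fun c₀ _ W _ => (∀ v ∈ W, c₀ ∉ Bd v) → ∀ π : ℕ → V,
      (∀ i, π i ∈ W) → (∀ i, E (π i) (π (i + 1))) →
      ∃ c : γ, (∃ v, InfOcc π v ∧ c ∈ Gd v) ∧ ∀ v, InfOcc π v → c ∉ Bd v)
    ?empty ?attr ?nil ?cons h
  case empty =>
    intro c₀ S hall hbd π hmem hpath
    have hfreq : ∀ N, ∃ j ≥ N, c₀ ∈ Gd (π j) := by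
      intro N
      obtain ⟨k, hk⟩ := hall (fun j => π (j + N)) (fun j => hmem _)
        (fun j => by simpa [Nat.add_right_comm] using hpath (j + N))
      exact ⟨k + N, Nat.le_add_left _ _, hk⟩
    obtain ⟨v, hv⟩ := pigeon π _ hfreq
    refine ⟨c₀, ⟨v, fun N => ⟨(hv N).choose, (hv N).choose_spec.1,
        (hv N).choose_spec.2.1⟩, ?_⟩, ?_⟩
    · obtain ⟨i, _, hiv, hgd⟩ := hv 0
      rw [← hiv]; exact hgd
    · intro w hw
      obtain ⟨i, _, hiw⟩ := hw 0
      exact hbd w (hiw ▸ hmem i)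
  case attr =>
    intro c₀ C S A hC hA hrest IH hbd π hmem hpath
    by_cases hAfreq : ∀ N, ∃ i ≥ N, π i ∈ A
    · have hfreq : ∀ N, ∃ j ≥ N, c₀ ∈ Gd (π j) := by
        intro N
        obtain ⟨i, hiN, hiA⟩ := hAfreq N
        rw [hA] at hiA
        obtain ⟨k, hk⟩ := hiA.2 (fun j => π (i + j)) (fun j => hmem _)
          (fun j => by simpa [Nat.add_assoc] using hpath (i + j)) rfl
        exact ⟨i + k, le_trans hiN (Nat.le_add_right _ _), hk⟩
      obtain ⟨v, hv⟩ := pigeon π _ hfreq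
      refine ⟨c₀, ⟨v, fun N => ⟨(hv N).choose, (hv N).choose_spec.1,
          (hv N).choose_spec.2.1⟩, ?_⟩, ?_⟩
      · obtain ⟨i, _, hiv, hgd⟩ := hv 0
        rw [← hiv]; exact hgd
      · intro w hw
        obtain ⟨i, _, hiw⟩ := hw 0
        exact hbd w (hiw ▸ hmem i)
    · push_neg at hAfreq
      obtain ⟨N, hN⟩ := hAfreq
      obtain ⟨c, ⟨v, hv, hgood⟩, hbadc⟩ :=
        IH (fun v hv => hbd v hv.1) (fun k => π (k + N))
          (fun k => ⟨hmem _, hN (k + N) (Nat.le_add_left _ _)⟩)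
          (fun k => by simpa [Nat.add_right_comm] using hpath (k + N))
      exact ⟨c, ⟨v, (infOcc_shift π N v).mp hv, hgood⟩,
        fun w hw => hbadc w ((infOcc_shift π N w).mpr hw)⟩
  case nil =>
    intro c₀ C hbd π hmem hpath
    exact absurd (hmem 0) (Set.notMem_empty _)
  case cons =>
    intro c₀ C W c Vi Ai hc hVW hcl hbad hdec hAi hrest IH1 IH2 hbd π hmem hpath
    by_cases hvis : ∃ i, π i ∈ Vi
    · obtain ⟨i0, hi0⟩ := hvis
      have hstay : ∀ k, π (k + i0) ∈ Vi := by
        intro k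
        induction k with
        | zero => simpa using hi0
        | succ k ih =>
          by_contra hnot
          refine hcl (π (k + i0)) ih (π (k + 1 + i0)) ⟨hmem _, hnot⟩ ?_
          refine Relation.ReflTransGen.single ⟨hmem _, hmem _, ?_⟩
          have : k + i0 + 1 = k + 1 + i0 := by omega
          simpa [this] using hpath (k + i0)
      obtain ⟨c', ⟨v, hv, hgood⟩, hbadc⟩ :=
        IH1 hbad (fun k => π (k + i0)) hstay
          (fun k => by simpa [Nat.add_right_comm] using hpath (k + i0))
      exact ⟨c', ⟨v, (infOcc_shift π i0 v).mp hv, hgood⟩,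
        fun w hw => hbadc w ((infOcc_shift π i0 w).mpr hw)⟩
    · push_neg at hvis
      have hAvoid : ∀ i, π i ∉ Ai := by
        intro i hi
        rw [hAi] at hi
        obtain ⟨k, hk⟩ := hi.2 (fun j => π (i + j)) (fun j => hmem _)
          (fun j => by simpa [Nat.add_assoc] using hpath (i + j)) rfl
        exact hvis _ hk
      exact IH2 (fun v hv => hbd v hv.1) π (fun i => ⟨hmem i, hAvoid i⟩) hpath
/-- if a finite `(c₀,C)`-colourful Rabin graph (every vertex
has an outgoing edge, good colours `Gd v ⊆ C ∪ {c₀}`, bad colours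
`Bd v ⊆ C`) admits a `(c₀,C)`-colourful decomposition of its whole vertex
set, then every infinite path satisfies the Rabin condition. -/
theorem stmt19 {V : Type u} {γ : Type v} [Fintype V] [DecidableEq γ]
    (E : V → V → Prop) (hE : ∀ v, ∃ w, E v w)
    (c₀ : γ) (C : Finset γ) (hc₀ : c₀ ∉ C)
    (Gd Bd : V → Set γ)
    (hG : ∀ v, Gd v ⊆ insert c₀ (C : Set γ))
    (hB : ∀ v, Bd v ⊆ (C : Set γ))
    (hdec : Decomp E Gd Bd c₀ C Set.univ)
    (π : ℕ → V) (hπ : ∀ i, E (π i) (π (i + 1))) :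
    ∃ c : γ,
      (∃ v : V, (∀ N, ∃ i ≥ N, π i = v) ∧ c ∈ Gd v) ∧
      (∀ v : V, (∀ N, ∃ i ≥ N, π i = v) → c ∉ Bd v) := by
  have hbd : ∀ v ∈ (Set.univ : Set V), c₀ ∉ Bd v := fun v _ hv => hc₀ (hB v hv)
  obtain ⟨c, ⟨v, hv, hgood⟩, hbad⟩ :=
    key hdec hbd π (fun i => Set.mem_univ _) hπ
  exact ⟨c, ⟨v, hv, hgood⟩, hbad⟩
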